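/- arXiv:1604.03099 — 4 statements merged into one kernel-verified Lean document; each statement's English description precedes it below -/
import Mathlib

section
/- The configuration α(x₁,x₂,x₃) = ψ(−x₁ + x₂ + x₃) is not expressible as a binary composition: there exist points in [0,1]³ witnessing that α differs from each of ψ(x₃ + ψ(−x₁ + x₂)), ψ(−1 + x₃ + ψ(1 − x₁ + x₂)), and ψ(−x₁ + ψ(x₂ + x₃)). -/
/-!
At the corners `(1, 0, 1)`, `(0, 1, 0)` and `(1, 1, 1)` respectively, the argument of the inner
neuron leaves `[0, 1]`; its clipping puts the outer neuron at the saturation level opposite to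
that of `ψ(-x₁ + x₂ + x₃)`.
-/

/-- The truncated identity activation function. -/
def psi (x : ℝ) : ℝ := min 1 (max 0 x)

lemma psi_of_nonpos {x : ℝ} (hx : x ≤ 0) : psi x = 0 := by
  simp [psi, max_eq_left hx]

lemma psi_of_one_le {x : ℝ} (hx : 1 ≤ x) : psi x = 1 := by
  simp [psi, max_eq_right (zero_le_one.trans hx), hx]

theorem unrepresentable_configuration :
    (∃ x₁ ∈ Set.Icc (0:ℝ) 1, ∃ x₂ ∈ Set.Icc (0:ℝ) 1, ∃ x₃ ∈ Set.Icc (0:ℝ) 1,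
      psi (-x₁ + x₂ + x₃) ≠ psi (x₃ + psi (-x₁ + x₂))) ∧
    (∃ x₁ ∈ Set.Icc (0:ℝ) 1, ∃ x₂ ∈ Set.Icc (0:ℝ) 1, ∃ x₃ ∈ Set.Icc (0:ℝ) 1,
      psi (-x₁ + x₂ + x₃) ≠ psi (-1 + x₃ + psi (1 - x₁ + x₂))) ∧
    (∃ x₁ ∈ Set.Icc (0:ℝ) 1, ∃ x₂ ∈ Set.Icc (0:ℝ) 1, ∃ x₃ ∈ Set.Icc (0:ℝ) 1,
      psi (-x₁ + x₂ + x₃) ≠ psi (-x₁ + psi (x₂ + x₃))) := by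
  have h₀ : (0 : ℝ) ∈ Set.Icc 0 1 := Set.left_mem_Icc.mpr zero_le_one
  have h₁ : (1 : ℝ) ∈ Set.Icc 0 1 := Set.right_mem_Icc.mpr zero_le_one
  refine ⟨⟨1, h₁, 0, h₀, 1, h₁, ?_⟩, ⟨0, h₀, 1, h₁, 0, h₀, ?_⟩, ⟨1, h₁, 1, h₁, 1, h₁, ?_⟩⟩ <;>
    simp (disch := norm_num) only [psi_of_nonpos, psi_of_one_le] <;> norm_num
end

section
/- Rewriting rule soundness for disjunctions: if b = b₀ + b₁ with b₁ ≤ b₀, and both the outer and inner neuron outputs lie strictly between saturation for some input (non-constancy), then in general ψ(b + w₁x₁ + ⋯ + wₙxₙ) = ψ(b₀ + w₁x₁ + ⋯ + w_{n−1}x_{n−1} + ψ(b₁ + wₙxₙ)) holds for all xᵢ ∈ [0,1] when the neuron is a disjunction (b = number of negative weights) or a conjunction (b = −p+1 with p positive weights), with weights wᵢ ∈ {−1, 1}. -/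
open Set

theorem psi_of_mem_Icc {x : ℝ} (hx : x ∈ Icc 0 1) : psi x = x := by
  rw [psi, max_eq_right hx.1, min_eq_right hx.2]

theorem mem_Ioo_of_psi_mem_Ioo {x : ℝ} (h : psi x ∈ Ioo 0 1) : x ∈ Ioo 0 1 := by
  simp only [psi, mem_Ioo, lt_min_iff, min_lt_iff, lt_max_iff, max_lt_iff, lt_irrefl,
    false_or] at h
  exact ⟨h.1.2, h.2.2⟩

theorem add_mul_mem_Icc_of_add_mul_mem_Ioo (b : ℤ) {w : ℝ} (hw : w = -1 ∨ w = 1)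
    {x₀ : ℝ} (hx₀ : x₀ ∈ Icc 0 1) (h : (b : ℝ) + w * x₀ ∈ Ioo 0 1)
    {x : ℝ} (hx : x ∈ Icc 0 1) : (b : ℝ) + w * x ∈ Icc 0 1 := by
  obtain ⟨hx₀0, hx₀1⟩ := hx₀
  obtain ⟨hx0, hx1⟩ := hx
  obtain ⟨h0, h1⟩ := h
  rcases hw with rfl | rfl
  · have hb : b = 1 := by
      have hb₀ : (0 : ℤ) < b := by exact_mod_cast (by linarith : (0 : ℝ) < b)
      have hb₂ : b < 2 := by exact_mod_cast (by linarith : (b : ℝ) < 2)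
      omega
    subst hb
    constructor <;> push_cast <;> linarith
  · have hb : b = 0 := by
      have hb₀ : (-1 : ℤ) < b := by exact_mod_cast (by linarith : (-1 : ℝ) < b)
      have hb₁ : b < 1 := by exact_mod_cast (by linarith : (b : ℝ) < 1)
      omega
    subst hb
    constructor <;> push_cast <;> linarith

theorem rule_R_soundness_general (n : ℕ) (w : Fin (n + 1) → ℝ)
    (hw : ∀ i, w i = -1 ∨ w i = 1) (b₀ b₁ : ℤ)
    -- non-constancy of the inner neuron
    (hinner : ∃ x ∈ Set.Icc (0:ℝ) 1,
      0 < psi ((b₁ : ℝ) + w (Fin.last n) * x) ∧ psi ((b₁ : ℝ) + w (Fin.last n) * x) < 1) :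
    ∀ x : Fin (n + 1) → ℝ, (∀ i, x i ∈ Set.Icc (0:ℝ) 1) →
      psi ((b₀ + b₁ : ℝ) + ∑ i, w i * x i) =
      psi ((b₀ : ℝ) + (∑ i : Fin n, w i.castSucc * x i.castSucc) +
        psi ((b₁ : ℝ) + w (Fin.last n) * x (Fin.last n))) := by
  intro x hx
  obtain ⟨x₀, hx₀, hinner⟩ := hinner
  have hinner_id : psi ((b₁ : ℝ) + w (Fin.last n) * x (Fin.last n)) =
      (b₁ : ℝ) + w (Fin.last n) * x (Fin.last n) :=
    psi_of_mem_Icc <| add_mul_mem_Icc_of_add_mul_mem_Ioo b₁ (hw _) hx₀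
      (mem_Ioo_of_psi_mem_Ioo hinner) (hx _)
  rw [hinner_id, Fin.sum_univ_castSucc]
  congr 1
  ring

/-- Soundness of the rewriting rule R splitting a conjunctive or disjunctive neuron. -/
theorem rule_R_soundness (n : ℕ) (hn : 1 ≤ n) (w : Fin (n + 1) → ℝ)
    (hw : ∀ i, w i = -1 ∨ w i = 1) (b₀ b₁ : ℤ) (hb : b₁ ≤ b₀)
    -- the neuron is a conjunction (bias = -p+1) or a disjunction (bias = number of
    -- negative weights), where p is the number of positive weights
    (hkind : (b₀ + b₁ : ℝ) = (Finset.univ.filter (fun i => w i = -1)).card ∨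
             (b₀ + b₁ : ℝ) = -((Finset.univ.filter (fun i => w i = 1)).card : ℝ) + 1)
    -- non-constancy of the inner neuron
    (hinner : ∃ x ∈ Set.Icc (0:ℝ) 1,
      0 < psi ((b₁ : ℝ) + w (Fin.last n) * x) ∧ psi ((b₁ : ℝ) + w (Fin.last n) * x) < 1)
    -- non-constancy of the outer neuron
    (houter : ∃ x : Fin (n + 1) → ℝ, (∀ i, x i ∈ Set.Icc (0:ℝ) 1) ∧
      0 < psi ((b₀ + b₁ : ℝ) + ∑ i, w i * x i) ∧
      psi ((b₀ + b₁ : ℝ) + ∑ i, w i * x i) < 1) :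
    ∀ x : Fin (n + 1) → ℝ, (∀ i, x i ∈ Set.Icc (0:ℝ) 1) →
      psi ((b₀ + b₁ : ℝ) + ∑ i, w i * x i) =
      psi ((b₀ : ℝ) + (∑ i : Fin n, w i.castSucc * x i.castSucc) +
        psi ((b₁ : ℝ) + w (Fin.last n) * x (Fin.last n))) :=
  rule_R_soundness_general n w hw b₀ b₁ hinner
end

section
/- Conjunctive neuron characterization: let the neuron have n negative-weight inputs x₁,…,xₙ and p positive-weight inputs x_{n+1},…,x_{n+p} with bias b = −p + 1. Then for all inputs in [0,1], ψ(b − x₁ − ⋯ − xₙ + x_{n+1} + ⋯ + x_{n+p}) = ¬x₁ ⊗ ⋯ ⊗ ¬xₙ ⊗ x_{n+1} ⊗ ⋯ ⊗ x_{n+p}. -/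
theorem psi_eq_max_zero_of_le_one {t : ℝ} (ht : t ≤ 1) : psi t = max 0 t :=
  min_eq_right (max_le zero_le_one ht)

theorem conjunctive_neuron_characterization_general (n p : ℕ)
    (x : Fin n → ℝ) (y : Fin p → ℝ)
    (hx : ∀ i, x i ∈ Set.Icc (0:ℝ) 1) (hy : ∀ j, y j ∈ Set.Icc (0:ℝ) 1) :
    psi ((-(p : ℝ) + 1) - (∑ i, x i) + ∑ j, y j) =
    max 0 ((∑ i, (1 - x i)) + (∑ j, y j) - ((n : ℝ) + (p : ℝ) - 1)) := by
  have hx_sum : 0 ≤ ∑ i, x i := Finset.sum_nonneg fun i _ => (hx i).1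
  have hy_sum : ∑ j, y j ≤ p := by
    simpa using Finset.sum_le_card_nsmul Finset.univ y 1 fun j _ => (hy j).2
  have hnot_sum : ∑ i, (1 - x i) = n - ∑ i, x i := by simp [Finset.sum_sub_distrib]
  -- The preactivation is at most `1`, so the upper cap of `psi` never binds.
  rw [psi_eq_max_zero_of_le_one (by linarith), hnot_sum]
  congr 1
  ring

/-- A neuron with `n` negative weights, `p` positive weights and bias `-p+1` computes
`¬x₁ ⊗ ⋯ ⊗ ¬xₙ ⊗ y₁ ⊗ ⋯ ⊗ y_p`, the multi-ary Łukasiewicz conjunction. -/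
theorem conjunctive_neuron_characterization (n p : ℕ) (hnp : 1 ≤ n + p)
    (x : Fin n → ℝ) (y : Fin p → ℝ)
    (hx : ∀ i, x i ∈ Set.Icc (0:ℝ) 1) (hy : ∀ j, y j ∈ Set.Icc (0:ℝ) 1) :
    psi ((-(p : ℝ) + 1) - (∑ i, x i) + ∑ j, y j) =
    max 0 ((∑ i, (1 - x i)) + (∑ j, y j) - ((n : ℝ) + (p : ℝ) - 1)) :=
  conjunctive_neuron_characterization_general n p x y hx hy
end

section
/- Disjunctive neuron characterization: let the neuron have n negative-weight inputs and p positive-weight inputs with bias b = n. Then for all inputs in [0,1], ψ(n − x₁ − ⋯ − xₙ + x_{n+1} + ⋯ + x_{n+p}) = ¬x₁ ⊕ ⋯ ⊕ ¬xₙ ⊕ x_{n+1} ⊕ ⋯ ⊕ x_{n+p}. -/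
theorem psi_of_nonneg {x : ℝ} (hx : 0 ≤ x) : psi x = min 1 x := by
  rw [psi, max_eq_right hx]

theorem Finset.sum_one_sub {ι R : Type*} [AddCommGroupWithOne R] (s : Finset ι) (x : ι → R) :
    ∑ i ∈ s, (1 - x i) = s.card - ∑ i ∈ s, x i := by
  rw [Finset.sum_sub_distrib, Finset.sum_const, nsmul_one]

theorem disjunctive_neuron_characterization_general (n p : ℕ)
    (x : Fin n → ℝ) (y : Fin p → ℝ)
    (hx : ∀ i, x i ∈ Set.Icc (0:ℝ) 1) (hy : ∀ j, y j ∈ Set.Icc (0:ℝ) 1) :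
    psi ((n : ℝ) - (∑ i, x i) + ∑ j, y j) =
    min 1 ((∑ i, (1 - x i)) + ∑ j, y j) := by
  have hnot_x_nonneg : 0 ≤ ∑ i, (1 - x i) := Finset.sum_nonneg fun i _ => sub_nonneg.2 (hx i).2
  have hy_nonneg : 0 ≤ ∑ j, y j := Finset.sum_nonneg fun j _ => (hy j).1
  rw [Finset.sum_one_sub, Finset.card_univ, Fintype.card_fin] at hnot_x_nonneg ⊢
  exact psi_of_nonneg (add_nonneg hnot_x_nonneg hy_nonneg)

/-- A neuron with `n` negative weights, `p` positive weights and bias `n` computes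
`¬x₁ ⊕ ⋯ ⊕ ¬xₙ ⊕ y₁ ⊕ ⋯ ⊕ y_p`, the multi-ary Łukasiewicz disjunction. -/
theorem disjunctive_neuron_characterization (n p : ℕ) (hnp : 1 ≤ n + p)
    (x : Fin n → ℝ) (y : Fin p → ℝ)
    (hx : ∀ i, x i ∈ Set.Icc (0:ℝ) 1) (hy : ∀ j, y j ∈ Set.Icc (0:ℝ) 1) :
    psi ((n : ℝ) - (∑ i, x i) + ∑ j, y j) =
    min 1 ((∑ i, (1 - x i)) + ∑ j, y j) :=
  disjunctive_neuron_characterization_general n p x y hx hy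
end
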